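/- Let p be a prime and R a finite perfect 𝔽_p-algebra. Let ℤ_pR denote the p-adic completion of ℤR (equivalently, the monoid algebra of (R,·) over ℤ_p) and let θ : ℤ_pR → C(R) be the natural surjective ring homomorphism. Then there exists an idempotent e ∈ ℤ_pR such that ker θ = e·ℤ_pR and the restriction of θ to the ideal (1−e)·ℤ_pR is a ring isomorphism onto C(R) (indeed a topological isomorphism of compact rings). -/

import Mathlib

set_option synthInstance.maxHeartbeats 1000000
set_option maxHeartbeats 1000000

open MonoidAlgebra

/-- `ℤR`: the monoid algebra over `ℤ` of the multiplicative monoid `(R, ·)`. -/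
abbrev ZR (R : Type*) [CommRing R] : Type _ := MonoidAlgebra ℤ R

/-- The canonical ring homomorphism `π : ℤR → R`, `Σ n_r [r] ↦ Σ n_r r`. -/
noncomputable def piHom (R : Type*) [CommRing R] : ZR R →+* R :=
  (MonoidAlgebra.lift ℤ R R (MonoidHom.id R)).toRingHom

/-- The ideal `I = ker (π : ℤR → R)`. -/
noncomputable def Iid (R : Type*) [CommRing R] : Ideal (ZR R) := RingHom.ker (piHom R)

/-- The inverse limit `lim_ν A⧸I^ν` realized as a subring of the product `Π ν, A⧸I^ν`
(families compatible under the canonical factor maps). -/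
def Clim (A : Type*) [CommRing A] (I : Ideal A) : Subring (Π ν : ℕ, A ⧸ I ^ ν) where
  carrier := { x | ∀ ⦃m ν : ℕ⦄ (h : m ≤ ν),
    Ideal.Quotient.factor (Ideal.pow_le_pow_right h) (x ν) = x m }
  zero_mem' := by intro m ν h; simp
  one_mem' := by intro m ν h; simp
  add_mem' := by intro x y hx hy m ν h; simp only [Pi.add_apply, map_add, hx h, hy h]
  mul_mem' := by intro x y hx hy m ν h; simp only [Pi.mul_apply, map_mul, hx h, hy h]
  neg_mem' := by intro x hx m ν h; simp only [Pi.neg_apply, map_neg, hx h]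

/-- The projection of the completion `lim_ν A⧸I^ν` onto its `ν`-th level `A⧸I^ν`. -/
def Ceval (A : Type*) [CommRing A] (I : Ideal A) (ν : ℕ) : Clim A I →+* A ⧸ I ^ ν :=
  (Pi.evalRingHom _ ν).comp (Clim A I).subtype

/-- The canonical map `A → lim_ν A⧸I^ν`. -/
def CofRingHom (A : Type*) [CommRing A] (I : Ideal A) : A →+* Clim A I where
  toFun a := ⟨fun ν => Ideal.Quotient.mk _ a, fun _ _ _ => Ideal.Quotient.factor_mk _ _⟩
  map_one' := rfl
  map_mul' _ _ := rfl
  map_zero' := rfl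
  map_add' _ _ := rfl

/-- `C(R)`: the `I`-adic completion of `ℤR`. -/
noncomputable abbrev CR (R : Type*) [CommRing R] : Type _ := Clim (ZR R) (Iid R)

/-- The canonical projection `π̄ : C(R) → R` induced by `π`. -/
noncomputable def CtoR (R : Type*) [CommRing R] : CR R →+* R :=
  (Ideal.Quotient.lift (Iid R) (piHom R) (fun _ ha => ha)).comp
    (((Ideal.quotEquivOfEq (pow_one (Iid R))).toRingHom).comp (Ceval (ZR R) (Iid R) 1))

/-- For ideals `I ≤ J` of `A`, the natural ring homomorphism `lim_ν A/I^ν → lim_ν A/J^ν`. -/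
noncomputable def thetaMap (A : Type*) [CommRing A] (I J : Ideal A) (hIJ : I ≤ J) :
    Clim A I →+* Clim A J :=
  RingHom.codRestrict
    ((Pi.ringHom fun ν => (Ideal.Quotient.factor (S := I ^ ν) (T := J ^ ν)
        (Ideal.pow_right_mono hIJ ν)).comp (Pi.evalRingHom _ ν)).comp (Clim A I).subtype)
    (Clim A J)
    (by
      intro x m ν h
      obtain ⟨a, ha⟩ := Ideal.Quotient.mk_surjective ((x : Π ν, A ⧸ I ^ ν) ν)
      have hm : (x : Π ν, A ⧸ I ^ ν) m = Ideal.Quotient.mk _ a := by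
        rw [← x.2 h, ← ha, Ideal.Quotient.factor_mk]
      change Ideal.Quotient.factor (Ideal.pow_le_pow_right h) (Ideal.Quotient.factor
        (Ideal.pow_right_mono hIJ ν) ((x : Π ν, A ⧸ I ^ ν) ν)) =
        Ideal.Quotient.factor (Ideal.pow_right_mono hIJ m) ((x : Π ν, A ⧸ I ^ ν) m)
      rw [← ha, hm, Ideal.Quotient.factor_mk, Ideal.Quotient.factor_mk,
        Ideal.Quotient.factor_mk])

lemma p_mem_Iid (p : ℕ) (R : Type*) [CommRing R] [CharP R p] : (p : ZR R) ∈ Iid R := by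
  have h : piHom R (p : ZR R) = 0 := by
    rw [map_natCast]; exact CharP.cast_eq_zero R p
  exact RingHom.mem_ker.mpr h

lemma spanP_le_Iid (p : ℕ) (R : Type*) [CommRing R] [CharP R p] :
    Ideal.span {(p : ZR R)} ≤ Iid R :=
  (Ideal.span_le).mpr (Set.singleton_subset_iff.mpr (p_mem_Iid p R))

/-!
Since `ℤR/p^ν` is finite, the descending chain of powers of the image `I_ν` of `I` in it
stabilises at an idempotent ideal, generated by a unique idempotent `e_ν`. Uniqueness forces the
`e_ν` to be compatible, so they form an idempotent `e` of `ℤ_pR`. An element lies in `ker θ` iff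
each truncation lies in `I_ν^ν`, iff (looking at deeper truncations) each truncation lies in the
stable power `e_ν·ℤR/p^ν`; hence `ker θ = e·ℤ_pR`. Surjectivity of `θ` is Kőnig's lemma for the
finite fibres over the truncations, and a surjection with kernel `e·S` restricts to a bijection
from `(1 - e)·S`.
-/
namespace IsIdempotentElem

variable {B : Type*} [CommRing B] {e f : B}

theorem mem_span_singleton_iff (he : IsIdempotentElem e) {x : B} :
    x ∈ Ideal.span {e} ↔ x * e = x := by
  refine ⟨fun hx => ?_, fun hx => hx ▸ Ideal.mul_mem_left _ x (Ideal.mem_span_singleton_self e)⟩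
  obtain ⟨a, rfl⟩ := Ideal.mem_span_singleton'.mp hx
  rw [mul_assoc, he.eq]

theorem eq_of_span_singleton_eq (he : IsIdempotentElem e) (hf : IsIdempotentElem f)
    (h : Ideal.span {e} = Ideal.span {f}) : e = f := by
  have hef : e * f = e := hf.mem_span_singleton_iff.mp (h ▸ Ideal.mem_span_singleton_self e)
  have hfe : f * e = f := he.mem_span_singleton_iff.mp (h ▸ Ideal.mem_span_singleton_self f)
  rw [← hef, mul_comm, hfe]

end IsIdempotentElem

namespace RingHom

variable {S T : Type*} [CommRing S] [CommRing T] (φ : S →+* T) {e : S}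

theorem injOn_span_one_sub_of_ker_eq_span (he : IsIdempotentElem e)
    (hker : RingHom.ker φ = Ideal.span {e}) : Set.InjOn φ (Ideal.span {1 - e} : Ideal S) := by
  intro x hx y hy hxy
  have hxy' : x - y ∈ Ideal.span {e} :=
    hker ▸ RingHom.mem_ker.mpr (by rw [map_sub, hxy, sub_self])
  have hsub : x - y ∈ Ideal.span {1 - e} := Ideal.sub_mem _ hx hy
  rw [he.mem_span_singleton_iff] at hxy'
  rw [he.one_sub.mem_span_singleton_iff] at hsub
  -- `x - y` is fixed by both `e` and `1 - e`, whose product vanishes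
  have : x - y = 0 := by
    rw [← hsub, ← hxy', mul_assoc, mul_sub, mul_one, he.eq, sub_self, mul_zero]
  exact sub_eq_zero.mp this

theorem exists_mem_span_one_sub_map_eq (hker : RingHom.ker φ = Ideal.span {e}) (x : S) :
    ∃ x' ∈ Ideal.span {1 - e}, φ x' = φ x := by
  have he : φ e = 0 := RingHom.mem_ker.mp (hker ▸ Ideal.mem_span_singleton_self e)
  refine ⟨(1 - e) * x, Ideal.mul_mem_right _ _ (Ideal.mem_span_singleton_self _), ?_⟩
  rw [map_mul, map_sub, map_one, he, sub_zero, one_mul]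

end RingHom

namespace Ideal

variable {B C : Type*} [CommRing B] [CommRing C] [IsArtinianRing B] (J : Ideal B)

theorem exists_iInf_pow_eq : ∃ N, ∀ k, N ≤ k → ⨅ n, J ^ n = J ^ k := by
  obtain ⟨N, hN⟩ := IsArtinian.monotone_stabilizes
    (⟨fun n => OrderDual.toDual (J ^ n), fun _ _ h => Ideal.pow_le_pow_right h⟩ :
      ℕ →o (Submodule B B)ᵒᵈ)
  have hN' : ∀ k, N ≤ k → J ^ k = J ^ N := fun k hk => (hN k hk).symm
  refine ⟨N, fun k hk => ?_⟩
  rw [hN' k hk]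
  refine le_antisymm (iInf_le _ N) (le_iInf fun n => ?_)
  rcases le_total n N with h | h
  · exact Ideal.pow_le_pow_right h
  · exact (hN' n h).ge

theorem isIdempotentElem_iInf_pow : IsIdempotentElem (⨅ n, J ^ n) := by
  obtain ⟨N, hN⟩ := J.exists_iInf_pow_eq
  rw [IsIdempotentElem, hN N le_rfl, ← pow_add, ← hN _ (Nat.le_add_left N N), hN N le_rfl]

theorem exists_isIdempotentElem_iInf_pow_eq_span :
    ∃ e : B, IsIdempotentElem e ∧ ⨅ n, J ^ n = Ideal.span {e} :=
  ((⨅ n, J ^ n).isIdempotentElem_iff_of_fg (IsNoetherian.noetherian _)).mp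
    J.isIdempotentElem_iInf_pow

theorem map_iInf_pow [IsArtinianRing C] (f : B →+* C) :
    (⨅ n, J ^ n).map f = ⨅ n, J.map f ^ n := by
  obtain ⟨N, hN⟩ := J.exists_iInf_pow_eq
  obtain ⟨N', hN'⟩ := (J.map f).exists_iInf_pow_eq
  rw [hN _ (le_max_left N N'), hN' _ (le_max_right N N'), Ideal.map_pow]

end Ideal

section Completion

open Ideal.Quotient CategoryTheory

variable {A : Type*} [CommRing A] {P I : Ideal A} (hPI : P ≤ I)

theorem map_factor_map_mk_pow {m ν : ℕ} (h : m ≤ ν) :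
    (I.map (mk (P ^ ν))).map (factor (Ideal.pow_le_pow_right h)) =
      I.map (mk (P ^ m)) := by
  rw [Ideal.map_map, factor_comp_mk]

theorem mem_ker_thetaMap_iff (x : Clim A P) :
    x ∈ RingHom.ker (thetaMap A P I hPI) ↔
      ∀ ν, (x : Π ν, A ⧸ P ^ ν) ν ∈ I.map (mk (P ^ ν)) ^ ν := by
  simp only [RingHom.mem_ker, Subtype.ext_iff, funext_iff]
  refine forall_congr' fun ν => ?_
  rw [← Ideal.map_pow, ← factor_ker (Ideal.pow_right_mono hPI ν), RingHom.mem_ker]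
  rfl

theorem mem_ker_thetaMap_iff_forall_mem_iInf_pow [∀ ν, IsArtinianRing (A ⧸ P ^ ν)]
    (x : Clim A P) :
    x ∈ RingHom.ker (thetaMap A P I hPI) ↔
      ∀ ν, (x : Π ν, A ⧸ P ^ ν) ν ∈ ⨅ k, I.map (mk (P ^ ν)) ^ k := by
  rw [mem_ker_thetaMap_iff]
  refine ⟨fun hx ν => ?_, fun hx ν => iInf_le (fun k => I.map (mk (P ^ ν)) ^ k) ν (hx ν)⟩
  obtain ⟨N, hN⟩ := (I.map (mk (P ^ ν))).exists_iInf_pow_eq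
  have hν : ν ≤ max ν N := le_max_left ν N
  -- the `ν`-th level is the image of a level deep enough for the powers to have stabilized
  rw [← x.2 hν, hN _ (le_max_right ν N), ← map_factor_map_mk_pow hν, ← Ideal.map_pow]
  exact Ideal.mem_map_of_mem _ (hx _)

theorem exists_isIdempotentElem_ker_thetaMap_eq_span [∀ ν, IsArtinianRing (A ⧸ P ^ ν)] :
    ∃ e : Clim A P, IsIdempotentElem e ∧
      RingHom.ker (thetaMap A P I hPI) = Ideal.span {e} := by
  choose e he hspan using fun ν =>
    (I.map (mk (P ^ ν))).exists_isIdempotentElem_iInf_pow_eq_span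
  have hcompat : ∀ ⦃m ν : ℕ⦄ (h : m ≤ ν), factor (Ideal.pow_le_pow_right h) (e ν) = e m := by
    intro m ν h
    refine ((he ν).map _).eq_of_span_singleton_eq (he m) ?_
    rw [← Set.image_singleton, ← Ideal.map_span, ← hspan, ← hspan, Ideal.map_iInf_pow,
      map_factor_map_mk_pow h]
  have he' : IsIdempotentElem (⟨e, hcompat⟩ : Clim A P) :=
    Subtype.ext (funext fun ν => (he ν).eq)
  refine ⟨_, he', Ideal.ext fun x => ?_⟩
  rw [mem_ker_thetaMap_iff_forall_mem_iInf_pow, he'.mem_span_singleton_iff, Subtype.ext_iff,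
    funext_iff]
  simp_rw [hspan, (he _).mem_span_singleton_iff]
  rfl

/-- A section of this inverse system of finite sets is a preimage of `y` under `θ`. -/
def thetaFiberSystem (y : Clim A I) : ℕᵒᵖ ⥤ Type _ where
  obj ν := {s : A ⧸ P ^ ν.unop //
    factor (Ideal.pow_right_mono hPI ν.unop) s = (y : Π ν, A ⧸ I ^ ν) ν.unop}
  map {ν μ} h := TypeCat.ofHom fun s => ⟨factor (Ideal.pow_le_pow_right h.unop.le) s.1, by
    rw [factor_comp_apply, ← y.2 h.unop.le, ← factor_comp_apply (Ideal.pow_right_mono hPI _),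
      s.2]⟩
  map_id ν := by
    ext s
    exact congrArg (· s.1) (congrArg DFunLike.coe (factor_eq (S := P ^ ν.unop)))
  map_comp f g := by
    ext s
    exact (factor_comp_apply _ _ s.1).symm

theorem thetaMap_surjective [∀ ν, Finite (A ⧸ P ^ ν)] :
    Function.Surjective (thetaMap A P I hPI) := by
  intro y
  have : ∀ ν : ℕᵒᵖ, Nonempty ((thetaFiberSystem hPI y).obj ν) := fun ν => by
    obtain ⟨a, ha⟩ := mk_surjective ((y : Π ν, A ⧸ I ^ ν) ν.unop)
    exact ⟨⟨mk _ a, by rw [factor_mk, ha]⟩⟩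
  have : ∀ ν : ℕᵒᵖ, Finite ((thetaFiberSystem hPI y).obj ν) := fun _ => Subtype.finite
  obtain ⟨s, hs⟩ := nonempty_sections_of_finite_inverse_system (thetaFiberSystem hPI y)
  exact ⟨⟨fun ν => (s (Opposite.op ν)).1, fun m ν h => congrArg Subtype.val (hs (homOfLE h).op)⟩,
    Subtype.ext (funext fun ν => (s (Opposite.op ν)).2)⟩

end Completion

theorem finite_quotient_span_natCast {A : Type*} [CommRing A] [Module.Finite ℤ A] {n : ℕ}
    (hn : n ≠ 0) : Finite (A ⧸ Ideal.span {(n : A)}) := by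
  have : Module.Finite ℤ (A ⧸ Ideal.span {(n : A)}) :=
    Module.Finite.of_surjective (Ideal.Quotient.mk _).toIntAlgHom.toLinearMap
      Ideal.Quotient.mk_surjective
  refine Module.finite_of_fg_torsion _ fun x => ?_
  obtain ⟨a, rfl⟩ := Ideal.Quotient.mk_surjective x
  refine ⟨⟨n, mem_nonZeroDivisors_of_ne_zero (Int.natCast_ne_zero.mpr hn)⟩, ?_⟩
  rw [Submonoid.mk_smul, natCast_zsmul, nsmul_eq_mul, ← map_natCast (Ideal.Quotient.mk _),
    ← map_mul, Ideal.Quotient.eq_zero_iff_mem]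
  exact Ideal.mul_mem_right _ _ (Ideal.mem_span_singleton_self _)

theorem statement17_general (p : ℕ) (R : Type*) [CommRing R] [CharP R p] [Finite R] :
    ∃ e : Clim (ZR R) (Ideal.span {(p : ZR R)}),
      IsIdempotentElem e ∧
      RingHom.ker (thetaMap (ZR R) (Ideal.span {(p : ZR R)}) (Iid R) (spanP_le_Iid p R)) =
        Ideal.span {e} ∧
      Set.InjOn (thetaMap (ZR R) (Ideal.span {(p : ZR R)}) (Iid R) (spanP_le_Iid p R))
        (Ideal.span {1 - e} : Ideal (Clim (ZR R) (Ideal.span {(p : ZR R)}))) ∧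
      ∀ y : CR R, ∃ x ∈ Ideal.span {1 - e},
        thetaMap (ZR R) (Ideal.span {(p : ZR R)}) (Iid R) (spanP_le_Iid p R) x = y := by
  have : ∀ ν, Finite (ZR R ⧸ Ideal.span {(p : ZR R)} ^ ν) := fun ν => by
    rw [Ideal.span_singleton_pow, ← Nat.cast_pow]
    exact finite_quotient_span_natCast (pow_ne_zero ν (CharP.char_ne_zero_of_finite R p))
  have : ∀ ν, IsArtinianRing (ZR R ⧸ Ideal.span {(p : ZR R)} ^ ν) :=
    fun _ => isArtinian_of_finite
  obtain ⟨e, he, hker⟩ := exists_isIdempotentElem_ker_thetaMap_eq_span (spanP_le_Iid p R)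
  refine ⟨e, he, hker, (thetaMap _ _ _ _).injOn_span_one_sub_of_ker_eq_span he hker, fun y => ?_⟩
  obtain ⟨x, rfl⟩ := thetaMap_surjective (spanP_le_Iid p R) y
  exact (thetaMap _ _ _ _).exists_mem_span_one_sub_map_eq hker x

/-- Let `p` be a prime and `R` a *finite* perfect `𝔽_p`-algebra. Let
`ℤ_pR = lim_ν ℤR/p^ν·ℤR` be the `p`-adic completion of `ℤR` and `θ : ℤ_pR → C(R)` the natural
surjective ring homomorphism.  Then there is an idempotent `e ∈ ℤ_pR` such that
`ker θ = e·ℤ_pR`, and the restriction of `θ` to the ideal `(1-e)·ℤ_pR` is a ring isomorphism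
onto `C(R)` (it is injective on `(1-e)·ℤ_pR` and maps it onto `C(R)`). -/
theorem statement17 (p : ℕ) [Fact p.Prime] (R : Type*) [CommRing R] [CharP R p] [Finite R]
    (hperf : Function.Bijective fun x : R => x ^ p) :
    ∃ e : Clim (ZR R) (Ideal.span {(p : ZR R)}),
      IsIdempotentElem e ∧
      RingHom.ker (thetaMap (ZR R) (Ideal.span {(p : ZR R)}) (Iid R) (spanP_le_Iid p R)) =
        Ideal.span {e} ∧
      Set.InjOn (thetaMap (ZR R) (Ideal.span {(p : ZR R)}) (Iid R) (spanP_le_Iid p R))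
        (Ideal.span {1 - e} : Ideal (Clim (ZR R) (Ideal.span {(p : ZR R)}))) ∧
      ∀ y : CR R, ∃ x ∈ Ideal.span {1 - e},
        thetaMap (ZR R) (Ideal.span {(p : ZR R)}) (Iid R) (spanP_le_Iid p R) x = y :=
  statement17_general p R
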